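/- arXiv:0810.1088 — 11 statements merged into one kernel-verified Lean document; each statement's English description precedes it below -/
import Mathlib

section
/- A genus g hyperelliptic Lefschetz fibration over the 2-sphere satisfies λ > 4 − 4/g if and only if s ≠ 0, i.e., if and only if it contains separating vanishing cycles. In the arithmetic model: λ > 4 − 4/g holds if and only if s ≠ 0. -/
/-- A genus `g` hyperelliptic Lefschetz fibration over `S²`
satisfies `λ > 4 - 4/g` if and only if `s ≠ 0`, i.e. iff it contains
separating vanishing cycles (arithmetic model). -/
theorem slope_gt_iff_separating
    (g n : ℕ) (hg : 2 ≤ g) (hn : 0 < n)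
    (sh : ℕ → ℕ)
    (s x σ χ χh c₁sq lam : ℚ)
    (hs : s = ∑ h ∈ Finset.Icc 1 (g / 2), (sh h : ℚ))
    (hx : x = ∑ h ∈ Finset.Icc 1 (g / 2), (h : ℚ) * ((g : ℚ) - (h : ℚ)) * (sh h : ℚ))
    (hσ : σ = -(((g : ℚ) + 1) / (2 * (g : ℚ) + 1)) * (n : ℚ)
            + 4 * x / (2 * (g : ℚ) + 1) - s)
    (hχ : χ = (n : ℚ) + s - 4 * ((g : ℚ) - 1))
    (hχh : χh = (σ + χ) / 4)
    (hc : c₁sq = 2 * χ + 3 * σ)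
    (hlam : lam = (c₁sq + 8 * ((g : ℚ) - 1)) / (χh + (g : ℚ) - 1)) :
    lam > 4 - 4 / (g : ℚ) ↔ s ≠ 0 := by
  have hg2 : (2:ℚ) ≤ (g:ℚ) := by exact_mod_cast hg
  have hgpos : (0:ℚ) < (g:ℚ) := by linarith
  have hnpos : (0:ℚ) < (n:ℚ) := by exact_mod_cast hn
  have h2g1 : (0:ℚ) < 2 * (g:ℚ) + 1 := by linarith
  -- nonnegativity of s
  have hs0 : (0:ℚ) ≤ s := by
    rw [hs]; exact Finset.sum_nonneg fun h _ => Nat.cast_nonneg _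
  -- termwise bound: (g-1) * sh h ≤ h (g-h) sh h
  have key : ∀ h ∈ Finset.Icc 1 (g / 2),
      ((g:ℚ) - 1) * (sh h : ℚ) ≤ (h : ℚ) * ((g : ℚ) - (h : ℚ)) * (sh h : ℚ) := by
    intro h hh
    simp only [Finset.mem_Icc] at hh
    have h1 : (1:ℚ) ≤ (h:ℚ) := by exact_mod_cast hh.1
    have h2n : h ≤ g - 1 := by omega
    have h2 : (h:ℚ) ≤ (g:ℚ) - 1 := by
      have := (Nat.cast_le (α := ℚ)).2 h2n
      rwa [Nat.cast_sub (by omega), Nat.cast_one] at this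
    have hsh0 : (0:ℚ) ≤ (sh h : ℚ) := Nat.cast_nonneg _
    nlinarith [mul_nonneg (mul_nonneg (sub_nonneg.2 h1) (sub_nonneg.2 h2)) hsh0]
  have hxges : ((g:ℚ) - 1) * s ≤ x := by
    rw [hs, hx, Finset.mul_sum]
    exact Finset.sum_le_sum key
  have hx0 : (0:ℚ) ≤ x := le_trans (by nlinarith) hxges
  -- denominator positivity
  have hD : χh + (g:ℚ) - 1 = ((n:ℚ) * g + 4 * x) / (4 * (2 * (g:ℚ) + 1)) := by
    rw [hχh, hσ, hχ]; field_simp; ring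
  have hDpos : 0 < χh + (g:ℚ) - 1 := by
    rw [hD]
    apply div_pos (by nlinarith) (by linarith)
  -- rewrite the slope inequality
  have hNum : (c₁sq + 8 * ((g:ℚ) - 1)) - (4 - 4 / (g:ℚ)) * (χh + (g:ℚ) - 1)
      = (4 * x - (g:ℚ) * s) / (g:ℚ) := by
    rw [hc, hχh, hσ, hχ]; field_simp; ring
  have hiff1 : lam > 4 - 4 / (g:ℚ) ↔ 0 < 4 * x - (g:ℚ) * s := by
    rw [hlam, gt_iff_lt, lt_div_iff₀ hDpos]
    constructor
    · intro hlt
      have : 0 < (4 * x - (g:ℚ) * s) / (g:ℚ) := by rw [← hNum]; linarith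
      have := (div_pos_iff.mp this)
      rcases this with ⟨h1, _⟩ | ⟨_, h2⟩
      · exact h1
      · linarith
    · intro hlt
      have : 0 < (4 * x - (g:ℚ) * s) / (g:ℚ) := div_pos hlt hgpos
      linarith [hNum ▸ this]
  rw [hiff1]
  constructor
  · intro hpos hs00
    -- s = 0 forces all sh h = 0 hence x = 0
    have hall : ∀ h ∈ Finset.Icc 1 (g / 2), (sh h : ℚ) = 0 := by
      have := (Finset.sum_eq_zero_iff_of_nonneg
        (fun h _ => Nat.cast_nonneg (α := ℚ) (sh h))).1 (by rw [← hs]; exact hs00)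
      exact this
    have hx00 : x = 0 := by
      rw [hx]
      exact Finset.sum_eq_zero fun h hh => by rw [hall h hh, mul_zero]
    rw [hx00, hs00] at hpos
    simp at hpos
  · intro hs00
    have hspos : 0 < s := lt_of_le_of_ne hs0 (Ne.symm hs00)
    nlinarith [hxges]
end

section
/- For a genus g hyperelliptic Lefschetz fibration with g ≥ 2 satisfying the signature bound σ ≤ n − s − 4, one has s/n ≤ (3g+2)/(4(g−1)) − (2g+1)/(n(g−1)); in particular s/n ≤ (3g+2)/(4(g−1)), so ρ(g) ≤ (3g+2)/(4(g−1)). -/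
/-! Each separating vanishing cycle of type `h` has weight `h (g - h) ≥ g - 1` in `x`, so
`x ≥ (g - 1) s`. Clearing the denominator `2g + 1` in the signature bound gives
`4x ≤ (3g + 2) n - 4(2g + 1)`, hence `4(g - 1) s ≤ (3g + 2) n - 4(2g + 1)`; dividing by
`4(g - 1) n` is the first estimate, and the second follows as `(2g + 1)/(n(g - 1)) > 0`. -/

open Finset

section

variable {R : Type*} [CommRing R] [PartialOrder R] [IsOrderedRing R]

theorem sub_one_le_mul_sub {g h : R}
    (h₁ : 1 ≤ h) (h₂ : h + 1 ≤ g) : g - 1 ≤ h * (g - h) := by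
  have key : h * (g - h) - (g - 1) = (h - 1) * (g - (h + 1)) := by ring
  exact sub_nonneg.1 (key ▸ mul_nonneg (sub_nonneg.2 h₁) (sub_nonneg.2 h₂))

theorem sub_one_mul_sum_le_sum_mul_sub (g : ℕ) (w : ℕ → R) (hw : ∀ h, 0 ≤ w h) :
    ((g : R) - 1) * ∑ h ∈ Icc 1 (g / 2), w h
      ≤ ∑ h ∈ Icc 1 (g / 2), (h : R) * ((g : R) - h) * w h := by
  rw [mul_sum]
  refine sum_le_sum fun h hh => mul_le_mul_of_nonneg_right ?_ (hw h)
  obtain ⟨h₁, h₂⟩ := mem_Icc.1 hh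
  have hh₁ : (1 : R) ≤ h := by simpa using Nat.mono_cast (α := R) h₁
  have hh₂ : (h : R) + 1 ≤ g := by simpa using Nat.mono_cast (α := R) (by omega : h + 1 ≤ g)
  exact sub_one_le_mul_sub hh₁ hh₂

end

section

variable {K : Type*} [Field K] [LinearOrder K] [IsStrictOrderedRing K]

theorem four_mul_le_of_signature_le {g n x s : K} (hg : 0 < 2 * g + 1)
    (h : -((g + 1) / (2 * g + 1)) * n + 4 * x / (2 * g + 1) - s ≤ n - s - 4) :
    4 * x ≤ (3 * g + 2) * n - 4 * (2 * g + 1) := by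
  have h' : (4 * x - (g + 1) * n) / (2 * g + 1) ≤ n - 4 := by
    rw [← sub_le_sub_iff_right s]
    convert h using 1 <;> ring
  rw [div_le_iff₀ hg] at h'
  linarith

theorem div_le_sub_div_of_four_mul_le {g n s : K} (hg : 1 < g) (hn : 0 < n)
    (h : 4 * (g - 1) * s ≤ (3 * g + 2) * n - 4 * (2 * g + 1)) :
    s / n ≤ (3 * g + 2) / (4 * (g - 1)) - (2 * g + 1) / (n * (g - 1)) := by
  have hg₁ : 0 < g - 1 := sub_pos.2 hg
  have hrhs : (3 * g + 2) / (4 * (g - 1)) - (2 * g + 1) / (n * (g - 1))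
      = ((3 * g + 2) * n - 4 * (2 * g + 1)) / (4 * (g - 1) * n) := by
    field_simp
  rw [hrhs, div_le_div_iff₀ hn (by positivity)]
  nlinarith [mul_le_mul_of_nonneg_right h hn.le]

end

/-- For a genus `g ≥ 2` hyperelliptic Lefschetz fibration
satisfying the signature bound `σ ≤ n - s - 4`, one has
`s/n ≤ (3g+2)/(4(g-1)) - (2g+1)/(n(g-1))`; in particular
`s/n ≤ (3g+2)/(4(g-1))` (so `ρ(g) ≤ (3g+2)/(4(g-1))`). -/
theorem ratio_estimate
    (g n : ℕ) (hg : 2 ≤ g) (hn : 0 < n)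
    (sh : ℕ → ℕ)
    (s x σ : ℚ)
    (hs : s = ∑ h ∈ Finset.Icc 1 (g / 2), (sh h : ℚ))
    (hx : x = ∑ h ∈ Finset.Icc 1 (g / 2), (h : ℚ) * ((g : ℚ) - (h : ℚ)) * (sh h : ℚ))
    (hσ : σ = -(((g : ℚ) + 1) / (2 * (g : ℚ) + 1)) * (n : ℚ)
            + 4 * x / (2 * (g : ℚ) + 1) - s)
    (hbound : σ ≤ (n : ℚ) - s - 4) :
    s / (n : ℚ) ≤ (3 * (g : ℚ) + 2) / (4 * ((g : ℚ) - 1))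
        - (2 * (g : ℚ) + 1) / ((n : ℚ) * ((g : ℚ) - 1)) ∧
    s / (n : ℚ) ≤ (3 * (g : ℚ) + 2) / (4 * ((g : ℚ) - 1)) := by
  have hg' : (1 : ℚ) < g := by exact_mod_cast hg
  have hn' : (0 : ℚ) < n := by exact_mod_cast hn
  have hx_ge : ((g : ℚ) - 1) * s ≤ x := by
    rw [hs, hx]
    exact sub_one_mul_sum_le_sum_mul_sub g _ fun h => Nat.cast_nonneg (sh h)
  have hx_le : 4 * x ≤ (3 * (g : ℚ) + 2) * n - 4 * (2 * g + 1) :=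
    four_mul_le_of_signature_le (by positivity) (hσ ▸ hbound)
  have hratio := div_le_sub_div_of_four_mul_le (s := s) hg' hn' (by linarith)
  refine ⟨hratio, hratio.trans (sub_le_self _ ?_)⟩
  have : (0 : ℚ) < (g : ℚ) - 1 := sub_pos.2 hg'
  positivity
end

section
/- For a genus g hyperelliptic Lefschetz fibration, the signature satisfies σ = −((8 − λ)/(12 − λ))·(n + s), where λ is the slope. -/
/-!
Both the numerator and the denominator of the slope are linear in `σ` and `N = n + s`:
`c₁² + 8(g - 1) = 3σ + 2N` and `χ_h + g - 1 = (σ + N)/4`. Hence `8 - λ = -4σ/(σ + N)` and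
`12 - λ = 4N/(σ + N)`, whose quotient is `-σ/N`. The only input from the fibration is that
`σ + N = (ng + 4x)/(2g + 1)` and `N` are positive, so neither division is by zero.
-/

theorem eq_neg_eight_sub_div_twelve_sub_mul {K : Type*} [Field K] [CharZero K] {σ N lam : K}
    (hσN : σ + N ≠ 0) (hN : N ≠ 0) (hlam : lam = (3 * σ + 2 * N) / ((σ + N) / 4)) :
    σ = -((8 - lam) / (12 - lam)) * N := by
  have h8 : 8 - lam = -4 * σ / (σ + N) := by
    rw [hlam]; field_simp; ring
  have h12 : 12 - lam = 4 * N / (σ + N) := by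
    rw [hlam]; field_simp; ring
  rw [h8, h12]
  field_simp

theorem signature_add_eq {K : Type*} [Field K] [LinearOrder K] [IsStrictOrderedRing K]
    {g n x s σ : K} (hg : 0 ≤ g)
    (hσ : σ = -((g + 1) / (2 * g + 1)) * n + 4 * x / (2 * g + 1) - s) :
    σ + (n + s) = (n * g + 4 * x) / (2 * g + 1) := by
  have : 2 * g + 1 ≠ 0 := by positivity
  rw [hσ]; field_simp; ring

theorem sum_Icc_mul_sub_mul_nonneg (g : ℕ) (sh : ℕ → ℕ) :
    0 ≤ ∑ h ∈ Finset.Icc 1 (g / 2), (h : ℚ) * ((g : ℚ) - (h : ℚ)) * (sh h : ℚ) := by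
  refine Finset.sum_nonneg fun h hh => ?_
  have hhg : (h : ℚ) ≤ g := by
    exact_mod_cast (Finset.mem_Icc.mp hh).2.trans (Nat.div_le_self g 2)
  have : (0 : ℚ) ≤ g - h := sub_nonneg.mpr hhg
  positivity

/-- For a genus `g` hyperelliptic Lefschetz fibration the
signature satisfies `σ = -((8 - λ)/(12 - λ))·(n + s)`, where `λ` is the slope. -/
theorem signature_in_terms_of_slope
    (g n : ℕ) (hg : 2 ≤ g) (hn : 0 < n)
    (sh : ℕ → ℕ)
    (s x σ χ χh c₁sq lam : ℚ)
    (hs : s = ∑ h ∈ Finset.Icc 1 (g / 2), (sh h : ℚ))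
    (hx : x = ∑ h ∈ Finset.Icc 1 (g / 2), (h : ℚ) * ((g : ℚ) - (h : ℚ)) * (sh h : ℚ))
    (hσ : σ = -(((g : ℚ) + 1) / (2 * (g : ℚ) + 1)) * (n : ℚ)
            + 4 * x / (2 * (g : ℚ) + 1) - s)
    (hχ : χ = (n : ℚ) + s - 4 * ((g : ℚ) - 1))
    (hχh : χh = (σ + χ) / 4)
    (hc : c₁sq = 2 * χ + 3 * σ)
    (hlam : lam = (c₁sq + 8 * ((g : ℚ) - 1)) / (χh + (g : ℚ) - 1)) :
    σ = -((8 - lam) / (12 - lam)) * ((n : ℚ) + s) := by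
  have hg₀ : (0 : ℚ) < g := by exact_mod_cast (by omega : 0 < g)
  have hn₀ : (0 : ℚ) < n := by exact_mod_cast hn
  have hs₀ : 0 ≤ s := hs ▸ by positivity
  have hx₀ : 0 ≤ x := hx ▸ sum_Icc_mul_sub_mul_nonneg g sh
  have hN : (0 : ℚ) < n + s := by linarith
  have hσN : 0 < σ + (n + s) := by
    rw [signature_add_eq hg₀.le hσ]
    have : 0 < (n : ℚ) * g := mul_pos hn₀ hg₀
    positivity
  refine eq_neg_eight_sub_div_twelve_sub_mul hσN.ne' hN.ne' ?_
  rw [hlam, hχh, hc, hχ]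
  congr 1 <;> ring
end

section
/- For a genus 2 Lefschetz fibration satisfying the signature bound σ ≤ n − s − 4, one has c₁² ≤ 6χ_h − 3. -/
theorem genus2_c1sq_bound_general
    (n s : ℕ)
    (σ χ χh c₁sq : ℚ)
    (hσ : σ = -(3/5) * (n : ℚ) - (1/5) * (s : ℚ))
    (hχ : χ = (n : ℚ) + (s : ℚ) - 4)
    (hχh : χh = (σ + χ) / 4)
    (hc : c₁sq = 2 * χ + 3 * σ)
    (hbound : σ ≤ (n : ℚ) - (s : ℚ) - 4) :
    c₁sq ≤ 6 * χh - 3 := by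
  subst hχh hc
  have hgap : 2 * χ + 3 * σ - (6 * ((σ + χ) / 4) - 3) = ((s : ℚ) + 5 - 2 * n) / 5 := by
    rw [hσ, hχ]; ring
  have hcycles : (s : ℚ) + 5 ≤ 2 * n := by
    rw [hσ] at hbound; linarith
  linarith

/-- For a genus `2` Lefschetz fibration satisfying the
signature bound `σ ≤ n - s - 4`, one has `c₁² ≤ 6χ_h - 3`. -/
theorem genus2_c1sq_bound
    (n s : ℕ) (hn : 0 < n)
    (σ χ χh c₁sq : ℚ)
    (hσ : σ = -(3/5) * (n : ℚ) - (1/5) * (s : ℚ))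
    (hχ : χ = (n : ℚ) + (s : ℚ) - 4)
    (hχh : χh = (σ + χ) / 4)
    (hc : c₁sq = 2 * χ + 3 * σ)
    (hbound : σ ≤ (n : ℚ) - (s : ℚ) - 4) :
    c₁sq ≤ 6 * χh - 3 :=
  genus2_c1sq_bound_general n s σ χ χh c₁sq hσ hχ hχh hc hbound
end

section
/- For a genus 2 Lefschetz fibration satisfying the signature bound σ ≤ n − s − 4, the slope satisfies λ ≤ 6 − 1/(χ_h + 1). -/
/-- For a genus `2` Lefschetz fibration satisfying the
signature bound `σ ≤ n - s - 4`, the slope satisfies `λ ≤ 6 - 1/(χ_h + 1)`. -/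
theorem genus2_slope_bound
    (n s : ℕ) (hn : 0 < n)
    (σ χ χh c₁sq lam : ℚ)
    (hσ : σ = -(3/5) * (n : ℚ) - (1/5) * (s : ℚ))
    (hχ : χ = (n : ℚ) + (s : ℚ) - 4)
    (hχh : χh = (σ + χ) / 4)
    (hc : c₁sq = 2 * χ + 3 * σ)
    (hlam : lam = (c₁sq + 8) / (χh + 1))
    (hbound : σ ≤ (n : ℚ) - (s : ℚ) - 4) :
    lam ≤ 6 - 1 / (χh + 1) := by
  have hn' : (1:ℚ) ≤ n := by exact_mod_cast hn
  have hs : (0:ℚ) ≤ s := by positivity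
  have hpos : 0 < χh + 1 := by
    rw [hχh, hχ, hσ]; nlinarith
  rw [hlam, div_le_iff₀ hpos, sub_mul, one_div, inv_mul_cancel₀ hpos.ne']
  subst hσ hχ hχh hc
  nlinarith [hbound]
end

section
/- For a genus 2 Lefschetz fibration with n ≥ 4 non-separating and s separating vanishing cycles satisfying 2n − s ≥ 5, the following chain of inequalities holds in ℚ: 2(n+7s)/(n+2s) ≤ 2(1+3s)/(1+s) ≤ 2(6s+3n−5)/(2s+n) ≤ 2(3n−7)/(n−2) ≤ 10(s+n−2)/(2s+n) ≤ 2(5n−s−12)/(n−2), where the leftmost quantity equals the slope λ. -/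
/-- For a genus `2` Lefschetz fibration with `n ≥ 4`
non-separating and `s` separating vanishing cycles satisfying `2n - s ≥ 5`,
the chain of inequalities
`2(n+7s)/(n+2s) ≤ 2(1+3s)/(1+s) ≤ 2(6s+3n-5)/(2s+n) ≤ 2(3n-7)/(n-2)
  ≤ 10(s+n-2)/(2s+n) ≤ 2(5n-s-12)/(n-2)`
holds in `ℚ`, where the leftmost quantity equals the slope `λ`. -/
theorem genus2_slope_inequality_chain
    (n s : ℕ) (hn : 4 ≤ n)
    (h2ns : 2 * (n : ℚ) - (s : ℚ) ≥ 5) :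
    2 * ((n : ℚ) + 7 * s) / ((n : ℚ) + 2 * s)
      ≤ 2 * (1 + 3 * (s : ℚ)) / (1 + (s : ℚ)) ∧
    2 * (1 + 3 * (s : ℚ)) / (1 + (s : ℚ))
      ≤ 2 * (6 * (s : ℚ) + 3 * n - 5) / (2 * (s : ℚ) + n) ∧
    2 * (6 * (s : ℚ) + 3 * n - 5) / (2 * (s : ℚ) + n)
      ≤ 2 * (3 * (n : ℚ) - 7) / ((n : ℚ) - 2) ∧
    2 * (3 * (n : ℚ) - 7) / ((n : ℚ) - 2)
      ≤ 10 * ((s : ℚ) + n - 2) / (2 * (s : ℚ) + n) ∧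
    10 * ((s : ℚ) + n - 2) / (2 * (s : ℚ) + n)
      ≤ 2 * (5 * (n : ℚ) - s - 12) / ((n : ℚ) - 2) := by
  have hs : (0:ℚ) ≤ s := Nat.cast_nonneg s
  have hn4 : (4:ℚ) ≤ n := by exact_mod_cast hn
  have d1 : (0:ℚ) < n + 2 * s := by linarith
  have d2 : (0:ℚ) < 1 + s := by linarith
  have d3 : (0:ℚ) < 2 * s + n := by linarith
  have d4 : (0:ℚ) < n - 2 := by linarith
  refine ⟨?_, ?_, ?_, ?_, ?_⟩
  · rw [div_le_div_iff₀ d1 d2]; nlinarith [sq_nonneg ((s:ℚ))]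
  · rw [div_le_div_iff₀ d2 d3]; nlinarith [mul_nonneg hs (by linarith : (0:ℚ) ≤ n - 4), sq_nonneg ((s:ℚ))]
  · rw [div_le_div_iff₀ d3 d4]; nlinarith [mul_nonneg hs (by linarith : (0:ℚ) ≤ n - 4)]
  · rw [div_le_div_iff₀ d4 d3]; nlinarith [mul_nonneg hs (by linarith : (0:ℚ) ≤ n - 4)]
  · rw [div_le_div_iff₀ d3 d4]; nlinarith [mul_nonneg hs (by linarith : (0:ℚ) ≤ 2*n - s - 5), mul_self_nonneg ((n:ℚ) - s - 2)]
end

section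
/- For a genus 2 Lefschetz fibration satisfying the signature bound σ ≤ n − s − 4, one has s/n ≤ (4χ_h + 3)/(2χ_h + 4), i.e., s·(2χ_h + 4) ≤ n·(4χ_h + 3). -/
/-- For a genus `2` Lefschetz fibration satisfying the
signature bound `σ ≤ n - s - 4`, one has `s/n ≤ (4χ_h + 3)/(2χ_h + 4)`,
i.e. `s·(2χ_h + 4) ≤ n·(4χ_h + 3)`. -/
theorem genus2_ratio_holomorphic_bound
    (n s : ℕ) (hn : 0 < n)
    (σ χ χh : ℚ)
    (hσ : σ = -(3/5) * (n : ℚ) - (1/5) * (s : ℚ))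
    (hχ : χ = (n : ℚ) + (s : ℚ) - 4)
    (hχh : χh = (σ + χ) / 4)
    (hbound : σ ≤ (n : ℚ) - (s : ℚ) - 4) :
    (s : ℚ) / (n : ℚ) ≤ (4 * χh + 3) / (2 * χh + 4) ∧
    (s : ℚ) * (2 * χh + 4) ≤ (n : ℚ) * (4 * χh + 3) := by
  have hn' : (0 : ℚ) < n := by exact_mod_cast hn
  have hs : (0 : ℚ) ≤ s := by positivity
  have hsle : (s : ℚ) ≤ 2 * n - 5 := by rw [hσ] at hbound; linarith
  have hχh' : χh = ((n : ℚ) + 2 * s) / 10 - 1 := by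
    rw [hχh, hσ, hχ]; ring
  have hden : (0 : ℚ) < 2 * χh + 4 := by rw [hχh']; linarith
  have hmul : (s : ℚ) * (2 * χh + 4) ≤ (n : ℚ) * (4 * χh + 3) := by
    rw [hχh']
    nlinarith [mul_nonneg (by linarith : (0:ℚ) ≤ (n : ℚ) + 2 * s)
      (by linarith : (0:ℚ) ≤ 2 * n - s - 5)]
  exact ⟨by rw [div_le_div_iff₀ hn' hden]; linarith, hmul⟩
end

section
/- For a genus g hyperelliptic Lefschetz fibration satisfying the signature bound σ ≤ n − s − 4, the slope satisfies λ ≤ 10 − (2 + s)/(χ_h + g − 1); in particular λ ≤ 10. -/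
/-!
The slope inequality is a rearrangement of the signature bound: expanding `c₁²` and `χ_h` in terms
of `σ` and `χ`, the inequality `c₁² + 8(g - 1) ≤ 10 (χ_h + g - 1) - (2 + s)` is exactly
`σ ≤ n - s - 4`. Dividing by `χ_h + g - 1 = (n g + 4 x) / (4 (2 g + 1))`, which is nonnegative
because every separating cycle of type `h ≤ g / 2` contributes `h (g - h) ≥ 0` to `x`, gives the
bound on `λ`, and `λ ≤ 10` follows as `s ≥ 0`.
-/

open Finset

theorem sum_Icc_half_mul_sub_mul_nonneg {K : Type*} [CommRing K] [PartialOrder K]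
    [IsOrderedRing K] (g : ℕ) (w : ℕ → K) (hw : ∀ h, 0 ≤ w h) :
    0 ≤ ∑ h ∈ Icc 1 (g / 2), (h : K) * ((g : K) - h) * w h := by
  refine sum_nonneg fun h hh => mul_nonneg (mul_nonneg h.cast_nonneg ?_) (hw h)
  have hhg : h ≤ g := (mem_Icc.mp hh).2.trans (Nat.div_le_self g 2)
  exact sub_nonneg.mpr (Nat.mono_cast hhg)

theorem div_le_sub_div_of_le_mul_sub {K : Type*} [Field K] [LinearOrder K] [IsStrictOrderedRing K]
    {a b c d : K} (hc : 0 ≤ c) (hd : 0 ≤ d) (h : a ≤ c * d - b) : a / d ≤ c - b / d := by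
  rcases hd.eq_or_lt with rfl | hd
  · simpa using hc
  · rw [div_le_iff₀ hd, sub_mul, div_mul_cancel₀ b hd.ne']
    linarith

theorem chiH_add_sub_one_eq {g : ℕ} {n x s σ χ χh : ℚ}
    (hσ : σ = -((g + 1) / (2 * g + 1)) * n + 4 * x / (2 * g + 1) - s)
    (hχ : χ = n + s - 4 * (g - 1)) (hχh : χh = (σ + χ) / 4) :
    χh + g - 1 = (n * g + 4 * x) / (4 * (2 * g + 1)) := by
  subst hχh hσ hχ
  field_simp
  ring

theorem slope_numerator_le_of_signature_le {g n s σ χ χh c₁sq : ℚ}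
    (hχ : χ = n + s - 4 * (g - 1)) (hχh : χh = (σ + χ) / 4) (hc : c₁sq = 2 * χ + 3 * σ)
    (hbound : σ ≤ n - s - 4) :
    c₁sq + 8 * (g - 1) ≤ 10 * (χh + g - 1) - (2 + s) := by
  subst hχh hc hχ
  linarith

theorem slope_general_upper_bound_general
    (g n : ℕ)
    (sh : ℕ → ℕ)
    (s x σ χ χh c₁sq lam : ℚ)
    (hs : s = ∑ h ∈ Finset.Icc 1 (g / 2), (sh h : ℚ))
    (hx : x = ∑ h ∈ Finset.Icc 1 (g / 2), (h : ℚ) * ((g : ℚ) - (h : ℚ)) * (sh h : ℚ))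
    (hσ : σ = -(((g : ℚ) + 1) / (2 * (g : ℚ) + 1)) * (n : ℚ)
            + 4 * x / (2 * (g : ℚ) + 1) - s)
    (hχ : χ = (n : ℚ) + s - 4 * ((g : ℚ) - 1))
    (hχh : χh = (σ + χ) / 4)
    (hc : c₁sq = 2 * χ + 3 * σ)
    (hlam : lam = (c₁sq + 8 * ((g : ℚ) - 1)) / (χh + (g : ℚ) - 1))
    (hbound : σ ≤ (n : ℚ) - s - 4) :
    lam ≤ 10 - (2 + s) / (χh + (g : ℚ) - 1) ∧ lam ≤ 10 := by
  have hs0 : 0 ≤ s := hs ▸ sum_nonneg fun h _ => (sh h).cast_nonneg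
  have hx0 : 0 ≤ x := hx ▸ sum_Icc_half_mul_sub_mul_nonneg g _ fun h => (sh h).cast_nonneg
  have hD : 0 ≤ χh + (g : ℚ) - 1 := by
    rw [chiH_add_sub_one_eq hσ hχ hχh]
    positivity
  have hslope : lam ≤ 10 - (2 + s) / (χh + (g : ℚ) - 1) := hlam ▸
    div_le_sub_div_of_le_mul_sub (by norm_num) hD
      (slope_numerator_le_of_signature_le hχ hχh hc hbound)
  exact ⟨hslope, hslope.trans (sub_le_self _ (div_nonneg (by positivity) hD))⟩

/-- For a genus `g` hyperelliptic Lefschetz fibration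
satisfying the signature bound `σ ≤ n - s - 4`, the slope satisfies
`λ ≤ 10 - (2 + s)/(χ_h + g - 1)`; in particular `λ ≤ 10`. -/
theorem slope_general_upper_bound
    (g n : ℕ) (hg : 2 ≤ g) (hn : 0 < n)
    (sh : ℕ → ℕ)
    (s x σ χ χh c₁sq lam : ℚ)
    (hs : s = ∑ h ∈ Finset.Icc 1 (g / 2), (sh h : ℚ))
    (hx : x = ∑ h ∈ Finset.Icc 1 (g / 2), (h : ℚ) * ((g : ℚ) - (h : ℚ)) * (sh h : ℚ))
    (hσ : σ = -(((g : ℚ) + 1) / (2 * (g : ℚ) + 1)) * (n : ℚ)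
            + 4 * x / (2 * (g : ℚ) + 1) - s)
    (hχ : χ = (n : ℚ) + s - 4 * ((g : ℚ) - 1))
    (hχh : χh = (σ + χ) / 4)
    (hc : c₁sq = 2 * χ + 3 * σ)
    (hlam : lam = (c₁sq + 8 * ((g : ℚ) - 1)) / (χh + (g : ℚ) - 1))
    (hbound : σ ≤ (n : ℚ) - s - 4) :
    lam ≤ 10 - (2 + s) / (χh + (g : ℚ) - 1) ∧ lam ≤ 10 :=
  slope_general_upper_bound_general g n sh s x σ χ χh c₁sq lam hs hx hσ hχ hχh hc hlam hbound
end

section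
/- Let X → S² be a simply connected genus g ≥ 2 hyperelliptic Lefschetz fibration with b₂⁺ ≥ 1. Then the number of non-separating vanishing cycles satisfies n ≥ 2g + 2; if moreover b₂⁺ > 1 (so that b₂⁺, being odd, is at least 3), then n ≥ 2g + 4. In the arithmetic model: if additionally χ_h = (b + 1)/2 for an integer b ≥ 1 (b playing the role of b₂⁺ with first Betti number b₁ = 0) and σ ≤ n − s − 4, then n ≥ 2g + 2; and if b is odd with b > 1, then n ≥ 2g + 4. -/
/-!
The signature bound `σ ≤ n - s - 4` cancels the separating cycles against the Euler
characteristic and gives `χ_h ≤ n/2 - g`. With `χ_h = (b + 1)/2` this reads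
`n ≥ 2g + 1 + b`, and `b ≥ 1`, resp. `b ≥ 3` for odd `b > 1`, gives the two bounds.
-/

theorem holomorphicEulerChar_le_of_signature_le {K : Type*} [Field K] [LinearOrder K]
    [IsStrictOrderedRing K] {g n s σ χ : K} (hχ : χ = n + s - 4 * (g - 1))
    (hσ : σ ≤ n - s - 4) : (σ + χ) / 4 ≤ n / 2 - g := by
  rw [hχ]
  linarith

theorem add_two_mul_add_one_le_of_half_le {g n : ℕ} {b : ℤ}
    (h : ((b : ℚ) + 1) / 2 ≤ (n : ℚ) / 2 - g) : b + 2 * g + 1 ≤ n := by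
  have : ((b + 2 * g + 1 : ℤ) : ℚ) ≤ (n : ℤ) := by
    push_cast
    linarith
  exact_mod_cast this

theorem Int.three_le_of_odd_of_one_lt {b : ℤ} (hodd : Odd b) (hb : 1 < b) : 3 ≤ b := by
  obtain ⟨k, rfl⟩ := hodd
  omega

theorem min_nonseparating_simply_connected_general
    (g n : ℕ)
    (s σ χ χh : ℚ) (b : ℤ)
    (hχ : χ = (n : ℚ) + s - 4 * ((g : ℚ) - 1))
    (hχh : χh = (σ + χ) / 4)
    (hb : 1 ≤ b)
    (hχhb : χh = ((b : ℚ) + 1) / 2)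
    (hbound : σ ≤ (n : ℚ) - s - 4) :
    2 * g + 2 ≤ n ∧ (Odd b → 1 < b → 2 * g + 4 ≤ n) := by
  have hχh_le : χh ≤ (n : ℚ) / 2 - g :=
    hχh ▸ holomorphicEulerChar_le_of_signature_le hχ hbound
  have hn : b + 2 * g + 1 ≤ n := add_two_mul_add_one_le_of_half_le (hχhb ▸ hχh_le)
  refine ⟨by omega, fun hodd hb_gt => ?_⟩
  have := Int.three_le_of_odd_of_one_lt hodd hb_gt
  omega

/-- For a simply connected genus `g ≥ 2` hyperelliptic
Lefschetz fibration with `b₂⁺ ≥ 1` (arithmetic model: `χ_h = (b + 1)/2` for an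
integer `b ≥ 1`, with `b₁ = 0`, and `σ ≤ n - s - 4`), the number of
non-separating vanishing cycles satisfies `n ≥ 2g + 2`; if moreover `b` is odd
with `b > 1`, then `n ≥ 2g + 4`. -/
theorem min_nonseparating_simply_connected
    (g n : ℕ) (hg : 2 ≤ g) (hn : 0 < n)
    (sh : ℕ → ℕ)
    (s x σ χ χh : ℚ) (b : ℤ)
    (hs : s = ∑ h ∈ Finset.Icc 1 (g / 2), (sh h : ℚ))
    (hx : x = ∑ h ∈ Finset.Icc 1 (g / 2), (h : ℚ) * ((g : ℚ) - (h : ℚ)) * (sh h : ℚ))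
    (hσ : σ = -(((g : ℚ) + 1) / (2 * (g : ℚ) + 1)) * (n : ℚ)
            + 4 * x / (2 * (g : ℚ) + 1) - s)
    (hχ : χ = (n : ℚ) + s - 4 * ((g : ℚ) - 1))
    (hχh : χh = (σ + χ) / 4)
    (hb : 1 ≤ b)
    (hχhb : χh = ((b : ℚ) + 1) / 2)
    (hbound : σ ≤ (n : ℚ) - s - 4) :
    2 * g + 2 ≤ n ∧ (Odd b → 1 < b → 2 * g + 4 ≤ n) :=
  min_nonseparating_simply_connected_general g n s σ χ χh b hχ hχh hb hχhb hbound
end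

section
/- For a genus g hyperelliptic Lefschetz fibration satisfying the signature bound σ ≤ n − s − 4, the slope satisfies the double estimate 4(g−1)/g + (4s/g)·((2g+1)(3g−4))/(ng + 4s(g−1)) ≤ λ ≤ 10 − 2(2+s)/(n−2). -/
/-!
Since `c₁² + 8(g-1) = 2(n+s) + 3σ` and `4(χ_h + g - 1) = σ + n + s`, the slope is
`λ = 12 - 4(n+s)/(σ+n+s)`, an increasing function of `σ`. The upper bound is its value at the
signature bound `σ = n - s - 4`. For the lower bound, `h(g-h) ≥ g - 1` for `1 ≤ h ≤ g - 1` gives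
`x ≥ (g-1)s`, hence `σ + n + s = (ng + 4x)/(2g+1) ≥ (ng + 4(g-1)s)/(2g+1)`, and the value of the
slope there is the stated lower bound.
-/

theorem sub_one_le_mul_sub_s17 {R : Type*} [CommRing R] [LinearOrder R] [IsStrictOrderedRing R]
    {a b : R} (h₁ : 1 ≤ a) (h₂ : a ≤ b - 1) : b - 1 ≤ a * (b - a) := by
  nlinarith

theorem sub_one_mul_sum_le_sum_mul_sub_mul (g : ℕ) (w : ℕ → ℚ) (hw : ∀ h, 0 ≤ w h) :
    ((g : ℚ) - 1) * ∑ h ∈ Finset.Icc 1 (g / 2), w h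
      ≤ ∑ h ∈ Finset.Icc 1 (g / 2), (h : ℚ) * ((g : ℚ) - (h : ℚ)) * w h := by
  rw [Finset.mul_sum]
  refine Finset.sum_le_sum fun h hh => ?_
  obtain ⟨h₁, h₂⟩ := Finset.mem_Icc.mp hh
  have hle : (h : ℚ) ≤ g - 1 := by
    rw [le_sub_iff_add_le]
    exact_mod_cast (by omega : h + 1 ≤ g)
  exact mul_le_mul_of_nonneg_right (sub_one_le_mul_sub_s17 (by exact_mod_cast h₁) hle) (hw h)

theorem slope_eq_twelve_sub_div {K : Type*} [Field K] [CharZero K] {g n s σ χ χh c₁sq lam : K}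
    (hχ : χ = n + s - 4 * (g - 1)) (hχh : χh = (σ + χ) / 4) (hc : c₁sq = 2 * χ + 3 * σ)
    (hlam : lam = (c₁sq + 8 * (g - 1)) / (χh + g - 1)) (hne : σ + n + s ≠ 0) :
    lam = 12 - 4 * (n + s) / (σ + n + s) := by
  subst hχ hχh hc hlam
  rw [show (σ + (n + s - 4 * (g - 1))) / 4 + g - 1 = (σ + n + s) / 4 by ring]
  field_simp
  ring

theorem slope_lower_bound_eq {K : Type*} [Field K] {g n s : K} (hg : g ≠ 0)
    (hd : n * g + 4 * s * (g - 1) ≠ 0) :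
    4 * (g - 1) / g + (4 * s / g) * ((2 * g + 1) * (3 * g - 4)) / (n * g + 4 * s * (g - 1))
      = 12 - 4 * (n + s) / ((n * g + 4 * s * (g - 1)) / (2 * g + 1)) := by
  generalize hd' : n * g + 4 * s * (g - 1) = d at hd ⊢
  field_simp
  linear_combination (8 * g + 4) * hd'

theorem slope_double_estimate_general
    (g n : ℕ) (hg : 2 ≤ g)
    (sh : ℕ → ℕ)
    (s x σ χ χh c₁sq lam : ℚ)
    (hs : s = ∑ h ∈ Finset.Icc 1 (g / 2), (sh h : ℚ))
    (hx : x = ∑ h ∈ Finset.Icc 1 (g / 2), (h : ℚ) * ((g : ℚ) - (h : ℚ)) * (sh h : ℚ))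
    (hσ : σ = -(((g : ℚ) + 1) / (2 * (g : ℚ) + 1)) * (n : ℚ)
            + 4 * x / (2 * (g : ℚ) + 1) - s)
    (hχ : χ = (n : ℚ) + s - 4 * ((g : ℚ) - 1))
    (hχh : χh = (σ + χ) / 4)
    (hc : c₁sq = 2 * χ + 3 * σ)
    (hlam : lam = (c₁sq + 8 * ((g : ℚ) - 1)) / (χh + (g : ℚ) - 1))
    (hbound : σ ≤ (n : ℚ) - s - 4) :
    4 * ((g : ℚ) - 1) / (g : ℚ)
        + (4 * s / (g : ℚ)) * ((2 * (g : ℚ) + 1) * (3 * (g : ℚ) - 4))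
            / ((n : ℚ) * (g : ℚ) + 4 * s * ((g : ℚ) - 1)) ≤ lam ∧
    lam ≤ 10 - 2 * (2 + s) / ((n : ℚ) - 2) := by
  have hg2 : (2 : ℚ) ≤ g := by exact_mod_cast hg
  have hs0 : 0 ≤ s := hs ▸ by positivity
  have hxs : ((g : ℚ) - 1) * s ≤ x :=
    hs ▸ hx ▸ sub_one_mul_sum_le_sum_mul_sub_mul g _ fun h => by positivity
  have hσns : σ + n + s = (n * g + 4 * x) / (2 * g + 1) := by
    rw [hσ]; field_simp; ring
  have hlow : (n * g + 4 * s * ((g : ℚ) - 1)) / (2 * g + 1) ≤ σ + n + s := by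
    rw [hσns]; exact div_le_div_of_nonneg_right (by linarith) (by positivity)
  have hupp : σ + n + s ≤ 2 * (n - 2) := by linarith
  have hn2 : (2 : ℚ) < n := by
    have hx0 : 0 ≤ x := by nlinarith
    have h : n * g + 4 * x ≤ 2 * (n - 2) * (2 * g + 1) := by
      rw [← div_le_iff₀ (by positivity), ← hσns]; exact hupp
    -- `n(3g+2) ≥ 4(2g+1) > 2(3g+2)`
    nlinarith
  have hden : 0 < (n : ℚ) * g + 4 * s * (g - 1) := by nlinarith
  have hpos : 0 < σ + n + s := (div_pos hden (by positivity)).trans_le hlow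
  have hg0 : (g : ℚ) ≠ 0 := by positivity
  have hn2' : (n : ℚ) - 2 ≠ 0 := by linarith
  rw [slope_eq_twelve_sub_div hχ hχh hc hlam hpos.ne']
  constructor
  · rw [slope_lower_bound_eq hg0 hden.ne']
    gcongr
  · calc 12 - 4 * (n + s) / (σ + n + s) ≤ 12 - 4 * (n + s) / (2 * (n - 2)) := by
            gcongr
      _ = _ := by field_simp; ring

/-- For a genus `g` hyperelliptic Lefschetz fibration
satisfying the signature bound `σ ≤ n - s - 4`, the slope satisfies the double
estimate
`4(g-1)/g + (4s/g)·((2g+1)(3g-4))/(ng + 4s(g-1)) ≤ λ ≤ 10 - 2(2+s)/(n-2)`. -/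
theorem slope_double_estimate
    (g n : ℕ) (hg : 2 ≤ g) (hn : 0 < n)
    (sh : ℕ → ℕ)
    (s x σ χ χh c₁sq lam : ℚ)
    (hs : s = ∑ h ∈ Finset.Icc 1 (g / 2), (sh h : ℚ))
    (hx : x = ∑ h ∈ Finset.Icc 1 (g / 2), (h : ℚ) * ((g : ℚ) - (h : ℚ)) * (sh h : ℚ))
    (hσ : σ = -(((g : ℚ) + 1) / (2 * (g : ℚ) + 1)) * (n : ℚ)
            + 4 * x / (2 * (g : ℚ) + 1) - s)
    (hχ : χ = (n : ℚ) + s - 4 * ((g : ℚ) - 1))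
    (hχh : χh = (σ + χ) / 4)
    (hc : c₁sq = 2 * χ + 3 * σ)
    (hlam : lam = (c₁sq + 8 * ((g : ℚ) - 1)) / (χh + (g : ℚ) - 1))
    (hbound : σ ≤ (n : ℚ) - s - 4) :
    4 * ((g : ℚ) - 1) / (g : ℚ)
        + (4 * s / (g : ℚ)) * ((2 * (g : ℚ) + 1) * (3 * (g : ℚ) - 4))
            / ((n : ℚ) * (g : ℚ) + 4 * s * ((g : ℚ) - 1)) ≤ lam ∧
    lam ≤ 10 - 2 * (2 + s) / ((n : ℚ) - 2) :=
  slope_double_estimate_general g n hg sh s x σ χ χh c₁sq lam hs hx hσ hχ hχh hc hlam hbound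
end

section
/- Let X → S² be a genus g hyperelliptic Lefschetz fibration with n non-separating vanishing cycles, and assume (as holds for any 4-manifold) that the signature σ and the holomorphic Euler characteristic χ_h are integers. Then: if g is odd, n is divisible by 4; and if g ≡ 2 (mod 4), n is even. -/
/-!
Eliminating `σ` between the signature formula and `σ + s + n = 4 (χ_h + g - 1)` gives
`g n = 4 ((2g + 1)(χ_h + g - 1) - x)`, and `x` is an integer, so integrality of `χ_h` alone
forces `4 ∣ g n`. The two cases then follow by parity: for odd `g` the factor `g` is prime
to `4`, and for `g = 2 g'` with `g'` odd we get `2 ∣ g' n`.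
-/

theorem genus_mul_nonsep_eq (g n s x σ χ χh : ℚ)
    (hσ : σ = -((g + 1) / (2 * g + 1)) * n + 4 * x / (2 * g + 1) - s)
    (hχ : χ = n + s - 4 * (g - 1)) (hχh : χh = (σ + χ) / 4) (hD : 2 * g + 1 ≠ 0) :
    g * n = 4 * ((2 * g + 1) * (χh + g - 1) - x) := by
  have hσ' : (2 * g + 1) * (σ + s) + (g + 1) * n = 4 * x := by
    rw [hσ]
    field_simp
    ring
  linear_combination -(2 * g + 1) * hχ - 4 * (2 * g + 1) * hχh - hσ'

theorem cast_sum_mul_sub_eq (g : ℕ) (sh : ℕ → ℕ) :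
    ((∑ h ∈ Finset.Icc 1 (g / 2), h * (g - h) * sh h : ℕ) : ℚ)
      = ∑ h ∈ Finset.Icc 1 (g / 2), (h : ℚ) * ((g : ℚ) - (h : ℚ)) * (sh h : ℚ) := by
  push_cast
  refine Finset.sum_congr rfl fun h hh => ?_
  rw [Nat.cast_sub ((Finset.mem_Icc.mp hh).2.trans (Nat.div_le_self g 2))]

theorem four_dvd_of_four_dvd_mul_of_odd {g n : ℕ} (h : 4 ∣ g * n) (hg : Odd g) : 4 ∣ n :=
  ((Nat.coprime_two_left.mpr hg).pow_left 2).dvd_of_dvd_mul_left h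

theorem two_dvd_of_four_dvd_mul_of_mod_four_eq_two {g n : ℕ} (h : 4 ∣ g * n) (hg : g % 4 = 2) :
    2 ∣ n := by
  obtain ⟨k, rfl⟩ : ∃ k, g = 2 * (2 * k + 1) := ⟨g / 4, by omega⟩
  have h2 : 2 ∣ (2 * k + 1) * n := by
    rw [show 4 = 2 * 2 by rfl, mul_assoc] at h
    exact Nat.dvd_of_mul_dvd_mul_left two_pos h
  exact Nat.coprime_two_left.mpr (odd_two_mul_add_one k) |>.dvd_of_dvd_mul_left h2

theorem nonseparating_divisibility_general
    (g n : ℕ)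
    (sh : ℕ → ℕ)
    (s x σ χ χh : ℚ)
    (hx : x = ∑ h ∈ Finset.Icc 1 (g / 2), (h : ℚ) * ((g : ℚ) - (h : ℚ)) * (sh h : ℚ))
    (hσ : σ = -(((g : ℚ) + 1) / (2 * (g : ℚ) + 1)) * (n : ℚ)
            + 4 * x / (2 * (g : ℚ) + 1) - s)
    (hχ : χ = (n : ℚ) + s - 4 * ((g : ℚ) - 1))
    (hχh : χh = (σ + χ) / 4)
    (hχhint : ∃ m : ℤ, χh = (m : ℚ)) :
    (Odd g → 4 ∣ n) ∧ (g % 4 = 2 → 2 ∣ n) := by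
  obtain ⟨b, rfl⟩ := hχhint
  set X : ℕ := ∑ h ∈ Finset.Icc 1 (g / 2), h * (g - h) * sh h
  have hX : x = X := by rw [hx, cast_sum_mul_sub_eq]
  have key : ((g * n : ℕ) : ℚ) = ((4 * ((2 * g + 1) * (b + g - 1) - X) : ℤ) : ℚ) := by
    push_cast
    rw [← hX]
    exact genus_mul_nonsep_eq g n s x σ χ b hσ hχ hχh (by positivity)
  have hdvd : 4 ∣ g * n := by
    have : ((4 : ℕ) : ℤ) ∣ ((g * n : ℕ) : ℤ) := ⟨_, by exact_mod_cast key⟩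
    exact Int.natCast_dvd_natCast.mp this
  exact ⟨four_dvd_of_four_dvd_mul_of_odd hdvd, two_dvd_of_four_dvd_mul_of_mod_four_eq_two hdvd⟩

/-- For a genus `g` hyperelliptic Lefschetz fibration whose
signature `σ` and holomorphic Euler characteristic `χ_h` are integers:
if `g` is odd then `n` is divisible by `4`; if `g ≡ 2 (mod 4)` then `n` is
even. -/
theorem nonseparating_divisibility
    (g n : ℕ) (hg : 2 ≤ g) (hn : 0 < n)
    (sh : ℕ → ℕ)
    (s x σ χ χh : ℚ)
    (hs : s = ∑ h ∈ Finset.Icc 1 (g / 2), (sh h : ℚ))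
    (hx : x = ∑ h ∈ Finset.Icc 1 (g / 2), (h : ℚ) * ((g : ℚ) - (h : ℚ)) * (sh h : ℚ))
    (hσ : σ = -(((g : ℚ) + 1) / (2 * (g : ℚ) + 1)) * (n : ℚ)
            + 4 * x / (2 * (g : ℚ) + 1) - s)
    (hχ : χ = (n : ℚ) + s - 4 * ((g : ℚ) - 1))
    (hχh : χh = (σ + χ) / 4)
    (hσint : ∃ m : ℤ, σ = (m : ℚ))
    (hχhint : ∃ m : ℤ, χh = (m : ℚ)) :
    (Odd g → 4 ∣ n) ∧ (g % 4 = 2 → 2 ∣ n) :=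
  nonseparating_divisibility_general g n sh s x σ χ χh hx hσ hχ hχh hχhint
end
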